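/- Fix ξ = (ξ₁,ξ₂) ∈ 𝔻, write |ξ|² = ξ₁²+ξ₂² and r² = (x−ξ₁)²+(y−ξ₂)². (i) Suppose h₁, h₂ : closure(𝔻) → ℝ are continuous on the closed unit disk, harmonic in 𝔻, with boundary values h₁(x,y) = −((x−ξ₁)⁴−6(x−ξ₁)²(y−ξ₂)²+(y−ξ₂)⁴)/r⁸ and h₂(x,y) = −4(x−ξ₁)(y−ξ₂)((x−ξ₁)²−(y−ξ₂)²)/r⁸ on ∂𝔻. Then at ξ: ∂h₁/∂x = ∂h₂/∂y = −4ξ₁(ξ₁²−3ξ₂²)/(1−|ξ|²)⁵, ∂h₁/∂y = −∂h₂/∂x = −4ξ₂(−3ξ₁²+ξ₂²)/(1−|ξ|²)⁵, ∂⁴h₁/∂x⁴ = ∂⁴h₁/∂y⁴ = −24(35+4(|ξ|²−1)³+30(|ξ|²−1)²+60(|ξ|²−1))/(1−|ξ|²)⁸, and ∂⁴h₂/∂x⁴ = ∂⁴h₂/∂y⁴ = 0. (ii) If instead the boundary values are h₁(x,y) = −4(x−ξ₁)(y−ξ₂)((x−ξ₁)²−(y−ξ₂)²)/r⁸ and h₂(x,y)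 = ((x−ξ₁)⁴−6(x−ξ₁)²(y−ξ₂)²+(y−ξ₂)⁴)/r⁸ on ∂𝔻, then at ξ: ∂h₁/∂x = ∂h₂/∂y = 4ξ₂(−3ξ₁²+ξ₂²)/(1−|ξ|²)⁵, ∂h₁/∂y = −∂h₂/∂x = −4ξ₁(ξ₁²−3ξ₂²)/(1−|ξ|²)⁵, ∂⁴h₁/∂x⁴ = ∂⁴h₁/∂y⁴ = 0, and ∂⁴h₂/∂x⁴ = ∂⁴h₂/∂y⁴ = 24(35+4(|ξ|²−1)³+30(|ξ|²−1)²+60(|ξ|²−1))/(1−|ξ|²)⁸. -/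

import Mathlib

noncomputable section

open Metric

/-- Partial derivative in the `x` direction of a scalar function, identifying `ℝ²` with `ℂ`
via `z = x + iy`. -/
def px (f : ℂ → ℝ) (z : ℂ) : ℝ := fderiv ℝ f z 1

/-- Partial derivative in the `y` direction. -/
def py (f : ℂ → ℝ) (z : ℂ) : ℝ := fderiv ℝ f z Complex.I

/-- `f` is harmonic on `s`: it is `C²` there and its Laplacian vanishes on `s`. -/
def HarmonicOnSet (f : ℂ → ℝ) (s : Set ℂ) : Prop :=
  ContDiffOn ℝ 2 f s ∧ ∀ z ∈ s, px (px f) z + py (py f) z = 0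

/-!
On the unit circle `z/(1 - conj ξ * z) = (z - ξ)/|z - ξ|²`, so in both parts each boundary datum
is `Re (a * w⁴)` on the circle, with `w = moebius (conj ξ) z` and `a ∈ {-1, I, 1}`. That function
is the real part of a function holomorphic near the closed disk, hence harmonic, and by the Poisson
formula it is the only harmonic extension of its boundary values. Its `n`-th derivative in the
direction `e` is `Re (a * eⁿ * K⁽ⁿ⁾)` with `K = w⁴`, and `w' = (1 + conj ξ * w)²` makes every `K⁽ⁿ⁾`
a polynomial in `w`, computed by iterating `p ↦ p' * (1 + conj ξ * X)²`.
-/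

open Complex ComplexConjugate Set InnerProductSpace Polynomial

-- `px = dirDeriv 1` and `py = dirDeriv I` hold by `rfl`, and the proofs below use this freely.
def dirDeriv (e : ℂ) (f : ℂ → ℝ) (z : ℂ) : ℝ := fderiv ℝ f z e

lemma dirDeriv_dirDeriv_eq_iteratedFDeriv {f : ℂ → ℝ} {z : ℂ} (hf : ContDiffAt ℝ 2 f z)
    (e : ℂ) : dirDeriv e (dirDeriv e f) z = iteratedFDeriv ℝ 2 f z ![e, e] := by
  have hdf : DifferentiableAt ℝ (fderiv ℝ f) z :=
    (hf.fderiv_right (m := 1) le_rfl).differentiableAt one_ne_zero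
  show fderiv ℝ (fun w => fderiv ℝ f w e) z e = _
  rw [iteratedFDeriv_two_apply, fderiv_clm_apply hdf (differentiableAt_const e)]
  simp

lemma HarmonicOnSet.harmonicOnNhd {f : ℂ → ℝ} {s : Set ℂ} (hs : IsOpen s)
    (hf : HarmonicOnSet f s) : HarmonicOnNhd f s := by
  intro z hz
  have hC2 : ∀ w ∈ s, ContDiffAt ℝ 2 f w := fun w hw => hf.1.contDiffAt (hs.mem_nhds hw)
  refine ⟨hC2 z hz, Filter.eventually_of_mem (hs.mem_nhds hz) fun w hw => ?_⟩
  simp only [laplacian_eq_iteratedFDeriv_complexPlane, Pi.zero_apply]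
  rw [← dirDeriv_dirDeriv_eq_iteratedFDeriv (hC2 w hw),
    ← dirDeriv_dirDeriv_eq_iteratedFDeriv (hC2 w hw)]
  exact hf.2 w hw

theorem eqOn_ball_of_eqOn_sphere {f g : ℂ → ℝ} {c : ℂ} {R : ℝ}
    (hf : HarmonicContOnCl f (ball c R)) (hg : HarmonicContOnCl g (ball c R))
    (hfg : EqOn f g (sphere c R)) : EqOn f g (ball c R) := by
  intro w hw
  have hR : 0 < R := pos_of_mem_ball hw
  rw [← sub_eq_zero, ← Pi.sub_apply, ← (hf.sub hg).circleAverage_poissonKernel_smul hw,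
    Real.circleAverage_congr_sphere (f₂ := fun _ => 0), Real.circleAverage_const]
  intro z hz
  rw [abs_of_pos hR] at hz
  simp [hfg hz]

lemma dirDeriv_congr {f g : ℂ → ℝ} {s : Set ℂ} (hs : IsOpen s) (hfg : EqOn f g s) (e : ℂ) :
    EqOn (dirDeriv e f) (dirDeriv e g) s := fun z hz => by
  simp only [dirDeriv, (hfg.eventuallyEq_of_mem (hs.mem_nhds hz)).fderiv_eq]

lemma dirDeriv_iterate_congr {f g : ℂ → ℝ} {s : Set ℂ} (hs : IsOpen s) (hfg : EqOn f g s)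
    (e : ℂ) (n : ℕ) : EqOn ((dirDeriv e)^[n] f) ((dirDeriv e)^[n] g) s := by
  induction n with
  | zero => exact hfg
  | succ n ih =>
    simp only [Function.iterate_succ_apply']
    exact dirDeriv_congr hs ih e

lemma HasDerivAt.dirDeriv_re_const_mul {K : ℂ → ℂ} {k z : ℂ} (hK : HasDerivAt K k z)
    (a e : ℂ) : dirDeriv e (fun w => (a * K w).re) z = (a * e * k).re := by
  have hre : HasFDerivAt (fun w => (a * K w).re) _ z :=
    (reCLM.hasFDerivAt (x := a * K z)).comp z ((hK.const_mul a).hasFDerivAt.restrictScalars ℝ)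
  rw [dirDeriv, hre.fderiv]
  simp [mul_comm, mul_left_comm]

def moebius (c z : ℂ) : ℂ := z / (1 - c * z)

lemma isOpen_setOf_one_sub_mul_ne_zero (c : ℂ) : IsOpen {z : ℂ | 1 - c * z ≠ 0} :=
  isOpen_ne_fun (by fun_prop) continuous_const

lemma one_add_mul_moebius {c z : ℂ} (hz : 1 - c * z ≠ 0) :
    1 + c * moebius c z = (1 - c * z)⁻¹ := by
  rw [moebius]
  field_simp
  ring

lemma hasDerivAt_moebius {c z : ℂ} (hz : 1 - c * z ≠ 0) :
    HasDerivAt (moebius c) ((1 + c * moebius c z) ^ 2) z := by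
  have hden : HasDerivAt (fun w => 1 - c * w) (-c) z := by
    simpa using ((hasDerivAt_id z).const_mul c).const_sub 1
  refine ((hasDerivAt_id' z).div hden hz).congr_deriv ?_
  rw [one_add_mul_moebius hz]
  field_simp
  ring

def moebiusDerivStep (c : ℂ) (p : ℂ[X]) : ℂ[X] := derivative p * (1 + C c * X) ^ 2

lemma hasDerivAt_eval_moebius (p : ℂ[X]) {c z : ℂ} (hz : 1 - c * z ≠ 0) :
    HasDerivAt (fun w => p.eval (moebius c w)) ((moebiusDerivStep c p).eval (moebius c z)) z := by
  refine ((p.hasDerivAt (moebius c z)).comp z (hasDerivAt_moebius hz)).congr_deriv ?_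
  simp [moebiusDerivStep]

lemma harmonicOnNhd_re_eval_moebius (a c : ℂ) (p : ℂ[X]) :
    HarmonicOnNhd (fun z => (a * p.eval (moebius c z)).re) {z | 1 - c * z ≠ 0} := by
  intro z hz
  refine AnalyticAt.harmonicAt_re (f := fun z => a * p.eval (moebius c z)) ?_
  refine DifferentiableOn.analyticAt (fun w hw => ?_)
    ((isOpen_setOf_one_sub_mul_ne_zero c).mem_nhds hz)
  exact ((hasDerivAt_eval_moebius p hw).const_mul a).differentiableAt.differentiableWithinAt

lemma dirDeriv_iterate_re_eval_moebius (a c e : ℂ) (p : ℂ[X]) (n : ℕ) :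
    EqOn ((dirDeriv e)^[n] (fun z => (a * p.eval (moebius c z)).re))
      (fun z => (a * e ^ n * ((moebiusDerivStep c)^[n] p).eval (moebius c z)).re)
      {z | 1 - c * z ≠ 0} := by
  induction n generalizing a p with
  | zero => intro z _; simp
  | succ n ih =>
    intro z hz
    have hstep : EqOn (dirDeriv e (fun z => (a * p.eval (moebius c z)).re))
        (fun z => (a * e * (moebiusDerivStep c p).eval (moebius c z)).re) {z | 1 - c * z ≠ 0} :=
      fun w hw => (hasDerivAt_eval_moebius p hw).dirDeriv_re_const_mul a e
    rw [Function.iterate_succ_apply,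
      dirDeriv_iterate_congr (isOpen_setOf_one_sub_mul_ne_zero c) hstep e n hz, ih _ _ hz,
      Function.iterate_succ_apply, pow_succ', mul_assoc a]

lemma eval_moebius_moebiusDerivStep_X_pow_four {c z : ℂ} (hz : 1 - c * z ≠ 0) :
    (moebiusDerivStep c (X ^ 4)).eval (moebius c z) = 4 * z ^ 3 / (1 - c * z) ^ 5 := by
  simp only [moebiusDerivStep, derivative_X_pow, Nat.cast_ofNat, Nat.add_one_sub_one, eval_mul,
    eval_pow, eval_add, eval_C, eval_one, eval_X]
  rw [one_add_mul_moebius hz, moebius]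
  field_simp

lemma eval_moebiusDerivStep_iterate_four_X_pow_four (c w : ℂ) :
    ((moebiusDerivStep c)^[4] (X ^ 4)).eval w =
      24 * (1 + c * w) ^ 5 * (1 + 15 * (c * w) + 45 * (c * w) ^ 2 + 35 * (c * w) ^ 3) := by
  show (moebiusDerivStep c (moebiusDerivStep c (moebiusDerivStep c
    (moebiusDerivStep c (X ^ 4))))).eval w = _
  simp only [moebiusDerivStep, derivative_mul, derivative_pow, derivative_add, derivative_X,
    derivative_C, derivative_one, Nat.cast_ofNat, Nat.add_one_sub_one, mul_one, zero_mul, zero_add,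
    pow_one, mul_zero, add_zero, eval_mul, eval_add, eval_C, eval_pow, eval_one, eval_X]
  ring

lemma eval_moebius_moebiusDerivStep_iterate_four_X_pow_four {c z : ℂ} (hz : 1 - c * z ≠ 0) :
    ((moebiusDerivStep c)^[4] (X ^ 4)).eval (moebius c z) =
      24 * (1 + 12 * (c * z) + 18 * (c * z) ^ 2 + 4 * (c * z) ^ 3) / (1 - c * z) ^ 8 := by
  rw [eval_moebiusDerivStep_iterate_four_X_pow_four, one_add_mul_moebius hz, moebius]
  field_simp
  ring

lemma moebius_conj_of_norm_eq_one (ξ : ℂ) {z : ℂ} (hz : ‖z‖ = 1) :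
    moebius (conj ξ) z = (z - ξ) / (normSq (z - ξ) : ℂ) := by
  have hz0 : z ≠ 0 := by rintro rfl; simp at hz
  have hden : 1 - conj ξ * z = z * conj (z - ξ) := by
    rw [map_sub, mul_sub, mul_conj, normSq_eq_norm_sq, hz]; push_cast; ring
  rw [moebius, hden, div_mul_cancel_left₀ hz0, inv_def, conj_conj, normSq_conj, div_eq_mul_inv,
    ofReal_inv]

lemma re_mul_moebius_conj_pow_four (a ξ : ℂ) {z : ℂ} (hz : ‖z‖ = 1) :
    (a * moebius (conj ξ) z ^ 4).re =
      (a.re * ((z.re - ξ.re) ^ 4 - 6 * (z.re - ξ.re) ^ 2 * (z.im - ξ.im) ^ 2 + (z.im - ξ.im) ^ 4) -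
        a.im * (4 * (z.re - ξ.re) * (z.im - ξ.im) * ((z.re - ξ.re) ^ 2 - (z.im - ξ.im) ^ 2))) /
      ((z.re - ξ.re) ^ 2 + (z.im - ξ.im) ^ 2) ^ 4 := by
  rw [moebius_conj_of_norm_eq_one ξ hz, div_pow, mul_div_assoc', ← ofReal_pow, div_ofReal_re,
    normSq_apply]
  simp only [mul_re, mul_im, pow_succ, pow_zero, one_mul, sub_re, sub_im]
  ring

lemma closedBall_subset_one_sub_conj_mul_ne_zero {ξ : ℂ} (hξ : ξ ∈ ball (0 : ℂ) 1) :
    closedBall (0 : ℂ) 1 ⊆ {z | 1 - conj ξ * z ≠ 0} := by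
  intro z hz hzero
  rw [mem_ball_zero_iff] at hξ
  rw [mem_closedBall_zero_iff] at hz
  have h1 : ‖conj ξ * z‖ = 1 := by rw [← sub_eq_zero.mp hzero, norm_one]
  rw [norm_mul, RCLike.norm_conj] at h1
  nlinarith [norm_nonneg z, norm_nonneg ξ]

lemma conj_mul_self_eq_ofReal (ξ : ℂ) : conj ξ * ξ = ((ξ.re ^ 2 + ξ.im ^ 2 : ℝ) : ℂ) := by
  rw [← normSq_eq_conj_mul_self, normSq_apply]
  ring_nf

section BoundaryValueProblem

variable {ξ : ℂ} (hξ : ξ ∈ ball (0 : ℂ) 1) (a : ℂ) {h : ℂ → ℝ}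
  (hc : ContinuousOn h (closedBall 0 1)) (hh : HarmonicOnSet h (ball 0 1))
  (hb : ∀ z ∈ sphere (0 : ℂ) 1, h z = (a * moebius (conj ξ) z ^ 4).re)
include hξ hc hh hb

theorem dirDeriv_iterate_eq_of_eqOn_sphere (e : ℂ) (n : ℕ) :
    (dirDeriv e)^[n] h ξ =
      (a * e ^ n * ((moebiusDerivStep (conj ξ))^[n] (X ^ 4)).eval (moebius (conj ξ) ξ)).re := by
  have hU := closedBall_subset_one_sub_conj_mul_ne_zero hξ
  have hH : HarmonicContOnCl h (ball 0 1) :=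
    ⟨hh.harmonicOnNhd isOpen_ball, by rwa [closure_ball 0 one_ne_zero]⟩
  have hK : HarmonicContOnCl (fun z => (a * (X ^ 4 : ℂ[X]).eval (moebius (conj ξ) z)).re)
      (ball 0 1) :=
    HarmonicOnNhd.harmonicContOnCl
      ((harmonicOnNhd_re_eval_moebius a _ _).mono (closure_ball_subset_closedBall.trans hU))
  have heq := eqOn_ball_of_eqOn_sphere hH hK fun z hz => by simp [hb z hz]
  rw [dirDeriv_iterate_congr isOpen_ball heq e n hξ]
  exact dirDeriv_iterate_re_eval_moebius a _ e _ n (hU (ball_subset_closedBall hξ))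

theorem partials_eq_of_eqOn_sphere :
    px h ξ = 4 * (a * ξ ^ 3).re / (1 - (ξ.re ^ 2 + ξ.im ^ 2)) ^ 5 ∧
    py h ξ = 4 * (a * I * ξ ^ 3).re / (1 - (ξ.re ^ 2 + ξ.im ^ 2)) ^ 5 ∧
    px (px (px (px h))) ξ = a.re * (24 * (1 + 12 * (ξ.re ^ 2 + ξ.im ^ 2) +
      18 * (ξ.re ^ 2 + ξ.im ^ 2) ^ 2 + 4 * (ξ.re ^ 2 + ξ.im ^ 2) ^ 3) /
        (1 - (ξ.re ^ 2 + ξ.im ^ 2)) ^ 8) ∧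
    py (py (py (py h))) ξ = a.re * (24 * (1 + 12 * (ξ.re ^ 2 + ξ.im ^ 2) +
      18 * (ξ.re ^ 2 + ξ.im ^ 2) ^ 2 + 4 * (ξ.re ^ 2 + ξ.im ^ 2) ^ 3) /
        (1 - (ξ.re ^ 2 + ξ.im ^ 2)) ^ 8) := by
  have hd := closedBall_subset_one_sub_conj_mul_ne_zero hξ (ball_subset_closedBall hξ)
  have first (e : ℂ) : (dirDeriv e)^[1] h ξ =
      4 * (a * e * ξ ^ 3).re / (1 - (ξ.re ^ 2 + ξ.im ^ 2)) ^ 5 := by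
    rw [dirDeriv_iterate_eq_of_eqOn_sphere hξ a hc hh hb, Function.iterate_one,
      eval_moebius_moebiusDerivStep_X_pow_four hd, conj_mul_self_eq_ofReal,
      show a * e ^ 1 * (4 * ξ ^ 3 / (1 - ((ξ.re ^ 2 + ξ.im ^ 2 : ℝ) : ℂ)) ^ 5) =
        ((4 : ℝ) * (a * e * ξ ^ 3)) / (((1 - (ξ.re ^ 2 + ξ.im ^ 2)) ^ 5 : ℝ) : ℂ) by
          push_cast; ring,
      div_ofReal_re, re_ofReal_mul]
  have fourth (e : ℂ) (he : e ^ 4 = 1) : (dirDeriv e)^[4] h ξ =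
      a.re * (24 * (1 + 12 * (ξ.re ^ 2 + ξ.im ^ 2) + 18 * (ξ.re ^ 2 + ξ.im ^ 2) ^ 2 +
        4 * (ξ.re ^ 2 + ξ.im ^ 2) ^ 3) / (1 - (ξ.re ^ 2 + ξ.im ^ 2)) ^ 8) := by
    rw [dirDeriv_iterate_eq_of_eqOn_sphere hξ a hc hh hb, he, mul_one,
      eval_moebius_moebiusDerivStep_iterate_four_X_pow_four hd, conj_mul_self_eq_ofReal]
    norm_cast
    rw [re_mul_ofReal]
  exact ⟨(first 1).trans (by rw [mul_one]), first I, fourth 1 (one_pow 4), fourth I I_pow_four⟩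

end BoundaryValueProblem

/-- Derivatives at `ξ` of the harmonic extensions of the two families of degree-2 boundary
data `h^{(2,1)}` (part (i)) and `h^{(2,2)}` (part (ii)). -/
theorem robin_function_h2l (ξ : ℂ) (hξ : ξ ∈ ball (0 : ℂ) 1) :
    (∀ h1 h2 : ℂ → ℝ,
      ContinuousOn h1 (closedBall (0 : ℂ) 1) → ContinuousOn h2 (closedBall (0 : ℂ) 1) →
      HarmonicOnSet h1 (ball (0 : ℂ) 1) → HarmonicOnSet h2 (ball (0 : ℂ) 1) →
      (∀ z ∈ sphere (0 : ℂ) 1,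
        h1 z = -((z.re - ξ.re) ^ 4 - 6 * (z.re - ξ.re) ^ 2 * (z.im - ξ.im) ^ 2 +
            (z.im - ξ.im) ^ 4) / ((z.re - ξ.re) ^ 2 + (z.im - ξ.im) ^ 2) ^ 4) →
      (∀ z ∈ sphere (0 : ℂ) 1,
        h2 z = -(4 * (z.re - ξ.re) * (z.im - ξ.im) *
            ((z.re - ξ.re) ^ 2 - (z.im - ξ.im) ^ 2)) /
          ((z.re - ξ.re) ^ 2 + (z.im - ξ.im) ^ 2) ^ 4) →
      (px h1 ξ = -(4 * ξ.re * (ξ.re ^ 2 - 3 * ξ.im ^ 2)) /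
          (1 - (ξ.re ^ 2 + ξ.im ^ 2)) ^ 5 ∧
       py h2 ξ = -(4 * ξ.re * (ξ.re ^ 2 - 3 * ξ.im ^ 2)) /
          (1 - (ξ.re ^ 2 + ξ.im ^ 2)) ^ 5 ∧
       py h1 ξ = -(4 * ξ.im * (-(3 * ξ.re ^ 2) + ξ.im ^ 2)) /
          (1 - (ξ.re ^ 2 + ξ.im ^ 2)) ^ 5 ∧
       px h2 ξ = 4 * ξ.im * (-(3 * ξ.re ^ 2) + ξ.im ^ 2) /
          (1 - (ξ.re ^ 2 + ξ.im ^ 2)) ^ 5 ∧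
       px (px (px (px h1))) ξ =
          -(24 * (35 + 4 * ((ξ.re ^ 2 + ξ.im ^ 2) - 1) ^ 3 +
              30 * ((ξ.re ^ 2 + ξ.im ^ 2) - 1) ^ 2 + 60 * ((ξ.re ^ 2 + ξ.im ^ 2) - 1))) /
            (1 - (ξ.re ^ 2 + ξ.im ^ 2)) ^ 8 ∧
       py (py (py (py h1))) ξ =
          -(24 * (35 + 4 * ((ξ.re ^ 2 + ξ.im ^ 2) - 1) ^ 3 +
              30 * ((ξ.re ^ 2 + ξ.im ^ 2) - 1) ^ 2 + 60 * ((ξ.re ^ 2 + ξ.im ^ 2) - 1))) /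
            (1 - (ξ.re ^ 2 + ξ.im ^ 2)) ^ 8 ∧
       px (px (px (px h2))) ξ = 0 ∧
       py (py (py (py h2))) ξ = 0)) ∧
    (∀ h1 h2 : ℂ → ℝ,
      ContinuousOn h1 (closedBall (0 : ℂ) 1) → ContinuousOn h2 (closedBall (0 : ℂ) 1) →
      HarmonicOnSet h1 (ball (0 : ℂ) 1) → HarmonicOnSet h2 (ball (0 : ℂ) 1) →
      (∀ z ∈ sphere (0 : ℂ) 1,
        h1 z = -(4 * (z.re - ξ.re) * (z.im - ξ.im) *
            ((z.re - ξ.re) ^ 2 - (z.im - ξ.im) ^ 2)) /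
          ((z.re - ξ.re) ^ 2 + (z.im - ξ.im) ^ 2) ^ 4) →
      (∀ z ∈ sphere (0 : ℂ) 1,
        h2 z = ((z.re - ξ.re) ^ 4 - 6 * (z.re - ξ.re) ^ 2 * (z.im - ξ.im) ^ 2 +
            (z.im - ξ.im) ^ 4) / ((z.re - ξ.re) ^ 2 + (z.im - ξ.im) ^ 2) ^ 4) →
      (px h1 ξ = 4 * ξ.im * (-(3 * ξ.re ^ 2) + ξ.im ^ 2) /
          (1 - (ξ.re ^ 2 + ξ.im ^ 2)) ^ 5 ∧
       py h2 ξ = 4 * ξ.im * (-(3 * ξ.re ^ 2) + ξ.im ^ 2) /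
          (1 - (ξ.re ^ 2 + ξ.im ^ 2)) ^ 5 ∧
       py h1 ξ = -(4 * ξ.re * (ξ.re ^ 2 - 3 * ξ.im ^ 2)) /
          (1 - (ξ.re ^ 2 + ξ.im ^ 2)) ^ 5 ∧
       px h2 ξ = 4 * ξ.re * (ξ.re ^ 2 - 3 * ξ.im ^ 2) /
          (1 - (ξ.re ^ 2 + ξ.im ^ 2)) ^ 5 ∧
       px (px (px (px h1))) ξ = 0 ∧
       py (py (py (py h1))) ξ = 0 ∧
       px (px (px (px h2))) ξ =
          24 * (35 + 4 * ((ξ.re ^ 2 + ξ.im ^ 2) - 1) ^ 3 +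
              30 * ((ξ.re ^ 2 + ξ.im ^ 2) - 1) ^ 2 + 60 * ((ξ.re ^ 2 + ξ.im ^ 2) - 1)) /
            (1 - (ξ.re ^ 2 + ξ.im ^ 2)) ^ 8 ∧
       py (py (py (py h2))) ξ =
          24 * (35 + 4 * ((ξ.re ^ 2 + ξ.im ^ 2) - 1) ^ 3 +
              30 * ((ξ.re ^ 2 + ξ.im ^ 2) - 1) ^ 2 + 60 * ((ξ.re ^ 2 + ξ.im ^ 2) - 1)) /
            (1 - (ξ.re ^ 2 + ξ.im ^ 2)) ^ 8)) := by
  have boundary (a : ℂ) {z : ℂ} (hz : z ∈ sphere (0 : ℂ) 1) :=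
    re_mul_moebius_conj_pow_four a ξ (mem_sphere_zero_iff_norm.mp hz)
  refine ⟨fun h1 h2 hc1 hc2 hh1 hh2 hb1 hb2 => ?_, fun h1 h2 hc1 hc2 hh1 hh2 hb1 hb2 => ?_⟩
  · obtain ⟨h1x, h1y, h1xxxx, h1yyyy⟩ := partials_eq_of_eqOn_sphere hξ (-1) hc1 hh1
      fun z hz => by rw [hb1 z hz, boundary _ hz]; simp
    obtain ⟨h2x, h2y, h2xxxx, h2yyyy⟩ := partials_eq_of_eqOn_sphere hξ I hc2 hh2
      fun z hz => by rw [hb2 z hz, boundary _ hz]; simp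
    rw [h1x, h2y, h1y, h2x, h1xxxx, h1yyyy, h2xxxx, h2yyyy]
    refine ⟨?_, ?_, ?_, ?_, ?_, ?_, ?_, ?_⟩ <;>
      simp only [pow_succ, pow_zero, one_mul, mul_re, mul_im, neg_re, neg_im, one_re, one_im, I_re,
        I_im] <;> ring
  · obtain ⟨h1x, h1y, h1xxxx, h1yyyy⟩ := partials_eq_of_eqOn_sphere hξ I hc1 hh1
      fun z hz => by rw [hb1 z hz, boundary _ hz]; simp
    obtain ⟨h2x, h2y, h2xxxx, h2yyyy⟩ := partials_eq_of_eqOn_sphere hξ 1 hc2 hh2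
      fun z hz => by rw [hb2 z hz, boundary _ hz]; simp
    rw [h1x, h2y, h1y, h2x, h1xxxx, h1yyyy, h2xxxx, h2yyyy]
    refine ⟨?_, ?_, ?_, ?_, ?_, ?_, ?_, ?_⟩ <;>
      simp only [pow_succ, pow_zero, one_mul, mul_re, mul_im, one_re, I_re, I_im] <;> ring
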